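/- (Diffusion property) Fix θ ∈ (-π/2, π/2) and n ≥ 1. Let φ⃗ = (φ₁,…,φ_n) with each φ_i : ℂ → ℂ twice continuously differentiable (as a function of two real variables), and let F : ℂⁿ → ℂ be twice continuously differentiable (as a function of 2n real variables). Then the chain-rule identity holds pointwise: L̃_θ(F∘φ⃗) = 4cosθ Σ_{i,j=1}^n [ ∂φ_i/∂z · ∂φ_j/∂z̄ · (∂²F/∂z_i∂z_j)∘φ⃗ + ∂(conj φ_i)/∂z · ∂(conj φ_j)/∂z̄ · (∂²F/∂z̄_i∂z̄_j)∘φ⃗ + (∂φ_i/∂z · ∂(conj φ_j)/∂z̄ + ∂φ_i/∂z̄ · ∂(conj φ_j)/∂z) · (∂²F/∂z_i∂z̄_j)∘φ⃗ ] + Σ_{i=1}^n [ L̃_θ(φ_i) · (∂F/∂z_i)∘φ⃗ + L̃_θ(conj φ_i) · (∂F/∂z̄_i)∘φ⃗ ]. -/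

import Mathlib

open MeasureTheory Complex Filter Finset
open scoped Real ComplexConjugate

/-- Wirtinger derivative `∂f/∂z = (1/2)(∂f/∂x - i ∂f/∂y)`. -/
noncomputable def dz (f : ℂ → ℂ) (z : ℂ) : ℂ :=
  (1 / 2 : ℂ) * (fderiv ℝ f z 1 - Complex.I * fderiv ℝ f z Complex.I)

/-- Wirtinger derivative `∂f/∂z̄ = (1/2)(∂f/∂x + i ∂f/∂y)`. -/
noncomputable def dzbar (f : ℂ → ℂ) (z : ℂ) : ℂ :=
  (1 / 2 : ℂ) * (fderiv ℝ f z 1 + Complex.I * fderiv ℝ f z Complex.I)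

/-- The complex Ornstein–Uhlenbeck operator
`L̃_θ f = 4cosθ ∂²f/∂z∂z̄ - e^{iθ} z ∂f/∂z - e^{-iθ} z̄ ∂f/∂z̄`. -/
noncomputable def LOU (θ : ℝ) (f : ℂ → ℂ) (z : ℂ) : ℂ :=
  4 * (Real.cos θ : ℂ) * dz (fun w => dzbar f w) z
    - Complex.exp (θ * Complex.I) * z * dz f z
    - Complex.exp (-θ * Complex.I) * (conj z) * dzbar f z

/-- Wirtinger derivative `∂F/∂z_i` for `F : ℂⁿ → ℂ`. -/
noncomputable def pdz {n : ℕ} (F : (Fin n → ℂ) → ℂ) (i : Fin n) (w : Fin n → ℂ) : ℂ :=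
  (1 / 2 : ℂ) * (fderiv ℝ F w (Pi.single i 1) - Complex.I * fderiv ℝ F w (Pi.single i Complex.I))

/-- Wirtinger derivative `∂F/∂z̄_i` for `F : ℂⁿ → ℂ`. -/
noncomputable def pdzbar {n : ℕ} (F : (Fin n → ℂ) → ℂ) (i : Fin n) (w : Fin n → ℂ) : ℂ :=
  (1 / 2 : ℂ) * (fderiv ℝ F w (Pi.single i 1) + Complex.I * fderiv ℝ F w (Pi.single i Complex.I))

lemma wirt_comb (c A B : ℂ) :
    c * ((1/2:ℂ) * (A - Complex.I*B)) + conj c * ((1/2:ℂ) * (A + Complex.I*B))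
      = (c.re:ℂ) * A + (c.im:ℂ) * B := by
  have h1 : c = (c.re : ℂ) + c.im * I := (re_add_im c).symm
  have h2 : conj c = (c.re:ℂ) - c.im*I := by simp [Complex.ext_iff]
  rw [h2]; nth_rewrite 1 [h1]
  ring_nf
  rw [Complex.I_sq]
  ring

lemma fderiv_eq_pdz_pdzbar {n : ℕ} {F : (Fin n → ℂ) → ℂ} {w : Fin n → ℂ}
    (hF : DifferentiableAt ℝ F w) (u : Fin n → ℂ) :
    fderiv ℝ F w u = ∑ i, (u i * pdz F i w + conj (u i) * pdzbar F i w) := by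
  conv_lhs => rw [← Finset.univ_sum_single u, map_sum]
  refine Finset.sum_congr rfl fun i _ => ?_
  have hs : Pi.single i (u i) = (u i).re • (Pi.single i (1:ℂ) : Fin n → ℂ) + (u i).im • (Pi.single i Complex.I : Fin n → ℂ) := by
    ext j
    rcases eq_or_ne j i with rfl | h
    · simp only [Pi.add_apply, Pi.smul_apply, Pi.single_eq_same, Complex.real_smul, mul_one]
      exact (Complex.re_add_im _).symm
    · simp [Pi.single_eq_of_ne h]
  rw [hs, map_add, _root_.map_smul, _root_.map_smul, pdz, pdzbar]
  simp only [Complex.real_smul]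
  rw [← wirt_comb]

lemma fderiv_eq_dz_dzbar {f : ℂ → ℂ} {z : ℂ} (hf : DifferentiableAt ℝ f z) (c : ℂ) :
    fderiv ℝ f z c = c * dz f z + conj c * dzbar f z := by
  have hc : c = c.re • (1:ℂ) + c.im • Complex.I := by
    simp [Complex.real_smul]
  nth_rewrite 1 [hc]
  rw [map_add, _root_.map_smul, _root_.map_smul, dz, dzbar]
  simp only [Complex.real_smul]
  rw [← wirt_comb]

lemma fderiv_conj {f : ℂ → ℂ} {z : ℂ} (hf : DifferentiableAt ℝ f z) (v : ℂ) :
    fderiv ℝ (fun w => conj (f w)) z v = conj (fderiv ℝ f z v) := by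
  have : (fun w => conj (f w)) = (Complex.conjCLE : ℂ → ℂ) ∘ f := rfl
  rw [this, fderiv_comp z Complex.conjCLE.differentiableAt hf]
  rw [ContinuousLinearEquiv.fderiv]
  simp

lemma contDiff_pdz {n : ℕ} {F : (Fin n → ℂ) → ℂ} (hF : ContDiff ℝ 2 F) (i : Fin n) :
    ContDiff ℝ 1 (pdz F i) := by
  have h1 : ∀ v, ContDiff ℝ 1 (fun w => fderiv ℝ F w v) := fun v =>
    (hF.fderiv_right (by norm_num)).clm_apply contDiff_const
  exact contDiff_const.mul ((h1 _).sub (contDiff_const.mul (h1 _)))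

lemma contDiff_pdzbar {n : ℕ} {F : (Fin n → ℂ) → ℂ} (hF : ContDiff ℝ 2 F) (i : Fin n) :
    ContDiff ℝ 1 (pdzbar F i) := by
  have h1 : ∀ v, ContDiff ℝ 1 (fun w => fderiv ℝ F w v) := fun v =>
    (hF.fderiv_right (by norm_num)).clm_apply contDiff_const
  exact contDiff_const.mul ((h1 _).add (contDiff_const.mul (h1 _)))

lemma contDiff_dzbar {f : ℂ → ℂ} (hf : ContDiff ℝ 2 f) : ContDiff ℝ 1 (dzbar f) := by
  have h1 : ∀ v, ContDiff ℝ 1 (fun w => fderiv ℝ f w v) := fun v =>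
    (hf.fderiv_right (by norm_num)).clm_apply contDiff_const
  exact contDiff_const.mul ((h1 _).add (contDiff_const.mul (h1 _)))

section comp
variable {n : ℕ} {φ : Fin n → ℂ → ℂ} {z : ℂ}

lemma fderiv_comp_phi (hφ : ∀ i, ContDiff ℝ 2 (φ i))
    {G : (Fin n → ℂ) → ℂ} (hG : DifferentiableAt ℝ G (fun i => φ i z)) (v : ℂ) :
    fderiv ℝ (fun w => G (fun i => φ i w)) z v
      = ∑ i, (fderiv ℝ (φ i) z v * pdz G i (fun k => φ k z)
            + conj (fderiv ℝ (φ i) z v) * pdzbar G i (fun k => φ k z)) := by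
  have hφd : ∀ i, DifferentiableAt ℝ (φ i) z := fun i =>
    ((hφ i).differentiable two_ne_zero).differentiableAt
  have hΦ : DifferentiableAt ℝ (fun w (i : Fin n) => φ i w) z :=
    differentiableAt_pi.2 hφd
  have hcomp := fderiv_comp (g := G) (f := fun w i => φ i w) z hG hΦ
  have : (fun w => G (fun i => φ i w)) = G ∘ (fun w i => φ i w) := rfl
  rw [this, hcomp]
  simp only [ContinuousLinearMap.comp_apply]
  rw [fderiv_pi hφd, fderiv_eq_pdz_pdzbar hG]
  simp only [ContinuousLinearMap.pi_apply]

lemma dz_comp (hφ : ∀ i, ContDiff ℝ 2 (φ i))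
    {G : (Fin n → ℂ) → ℂ} (hG : DifferentiableAt ℝ G (fun i => φ i z)) :
    dz (fun w => G (fun i => φ i w)) z
      = ∑ i, (dz (φ i) z * pdz G i (fun k => φ k z)
            + dz (fun w => conj (φ i w)) z * pdzbar G i (fun k => φ k z)) := by
  have hφd : ∀ i, DifferentiableAt ℝ (φ i) z := fun i =>
    ((hφ i).differentiable two_ne_zero).differentiableAt
  rw [dz, fderiv_comp_phi hφ hG 1, fderiv_comp_phi hφ hG Complex.I,
    Finset.mul_sum, ← Finset.sum_sub_distrib, Finset.mul_sum]
  refine Finset.sum_congr rfl fun i _ => ?_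
  rw [dz, dz, fderiv_conj (hφd i), fderiv_conj (hφd i)]
  ring

lemma dzbar_comp (hφ : ∀ i, ContDiff ℝ 2 (φ i))
    {G : (Fin n → ℂ) → ℂ} (hG : DifferentiableAt ℝ G (fun i => φ i z)) :
    dzbar (fun w => G (fun i => φ i w)) z
      = ∑ i, (dzbar (φ i) z * pdz G i (fun k => φ k z)
            + dzbar (fun w => conj (φ i w)) z * pdzbar G i (fun k => φ k z)) := by
  have hφd : ∀ i, DifferentiableAt ℝ (φ i) z := fun i =>
    ((hφ i).differentiable two_ne_zero).differentiableAt
  rw [dzbar, fderiv_comp_phi hφ hG 1, fderiv_comp_phi hφ hG Complex.I,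
    Finset.mul_sum, ← Finset.sum_add_distrib, Finset.mul_sum]
  refine Finset.sum_congr rfl fun i _ => ?_
  rw [dzbar, dzbar, fderiv_conj (hφd i), fderiv_conj (hφd i)]
  ring

end comp

lemma dz_sum {n : ℕ} {f : Fin n → ℂ → ℂ} {z : ℂ} (h : ∀ i, DifferentiableAt ℝ (f i) z) :
    dz (fun w => ∑ i, f i w) z = ∑ i, dz (f i) z := by
  rw [dz, fderiv_fun_sum (fun i _ => h i)]
  simp only [ContinuousLinearMap.coe_sum', Finset.sum_apply]
  rw [Finset.mul_sum, ← Finset.sum_sub_distrib, Finset.mul_sum]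
  exact Finset.sum_congr rfl fun i _ => by rw [dz]

lemma dz_add {f g : ℂ → ℂ} {z : ℂ} (hf : DifferentiableAt ℝ f z) (hg : DifferentiableAt ℝ g z) :
    dz (fun w => f w + g w) z = dz f z + dz g z := by
  rw [dz, fderiv_fun_add hf hg]
  simp only [ContinuousLinearMap.add_apply]
  rw [dz, dz]; ring

lemma dz_mul {f g : ℂ → ℂ} {z : ℂ} (hf : DifferentiableAt ℝ f z) (hg : DifferentiableAt ℝ g z) :
    dz (fun w => f w * g w) z = dz f z * g z + f z * dz g z := by
  rw [dz, fderiv_fun_mul hf hg]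
  simp only [ContinuousLinearMap.add_apply, ContinuousLinearMap.smul_apply, smul_eq_mul]
  rw [dz, dz]; ring

section aux2
variable {E : Type*} [NormedAddCommGroup E] [NormedSpace ℝ E]

lemma fderiv_dir_fderiv {f : E → ℂ} (hf : ContDiff ℝ 2 f) (z u v : E) :
    fderiv ℝ (fun w => fderiv ℝ f w v) z u = fderiv ℝ (fderiv ℝ f) z u v := by
  have h2 : DifferentiableAt ℝ (fderiv ℝ f) z :=
    ((hf.fderiv_right (m := 1) (by norm_num)).differentiable one_ne_zero).differentiableAt
  rw [fderiv_clm_apply h2 (differentiableAt_const v)]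
  simp

lemma second_symm {f : E → ℂ} (hf : ContDiff ℝ 2 f) (z u v : E) :
    fderiv ℝ (fderiv ℝ f) z u v = fderiv ℝ (fderiv ℝ f) z v u :=
  second_derivative_symmetric (f := f)
    (fun y => ((hf.differentiable two_ne_zero) y).hasFDerivAt)
    (((hf.fderiv_right (m := 1) (by norm_num)).differentiable one_ne_zero z).hasFDerivAt) u v
end aux2

section secder
variable {n : ℕ} {F : (Fin n → ℂ) → ℂ}

lemma fderiv_pdz_apply (hF : ContDiff ℝ 2 F) (i : Fin n) (w u : Fin n → ℂ) :
    fderiv ℝ (pdz F i) w u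
      = (1/2:ℂ) * (fderiv ℝ (fderiv ℝ F) w u (Pi.single i 1)
          - Complex.I * fderiv ℝ (fderiv ℝ F) w u (Pi.single i Complex.I)) := by
  have h1 : ∀ v, Differentiable ℝ (fun w' => fderiv ℝ F w' v) := fun v =>
    ((hF.fderiv_right (m := 1) (by norm_num)).clm_apply contDiff_const).differentiable one_ne_zero
  have hd : DifferentiableAt ℝ (fun w' => fderiv ℝ F w' (Pi.single i 1)
      - Complex.I * fderiv ℝ F w' (Pi.single i Complex.I)) w :=
    ((h1 _) w).sub (((h1 _) w).const_mul _)
  have : pdz F i = fun w' => (1/2:ℂ) * (fderiv ℝ F w' (Pi.single i 1)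
      - Complex.I * fderiv ℝ F w' (Pi.single i Complex.I)) := rfl
  rw [this, fderiv_const_mul hd, fderiv_fun_sub ((h1 _) w) (((h1 _) w).const_mul _),
    fderiv_const_mul ((h1 _) w)]
  simp only [ContinuousLinearMap.smul_apply, ContinuousLinearMap.sub_apply, smul_eq_mul]
  rw [fderiv_dir_fderiv hF, fderiv_dir_fderiv hF]

lemma fderiv_pdzbar_apply (hF : ContDiff ℝ 2 F) (i : Fin n) (w u : Fin n → ℂ) :
    fderiv ℝ (pdzbar F i) w u
      = (1/2:ℂ) * (fderiv ℝ (fderiv ℝ F) w u (Pi.single i 1)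
          + Complex.I * fderiv ℝ (fderiv ℝ F) w u (Pi.single i Complex.I)) := by
  have h1 : ∀ v, Differentiable ℝ (fun w' => fderiv ℝ F w' v) := fun v =>
    ((hF.fderiv_right (m := 1) (by norm_num)).clm_apply contDiff_const).differentiable one_ne_zero
  have hd : DifferentiableAt ℝ (fun w' => fderiv ℝ F w' (Pi.single i 1)
      + Complex.I * fderiv ℝ F w' (Pi.single i Complex.I)) w :=
    ((h1 _) w).add (((h1 _) w).const_mul _)
  have : pdzbar F i = fun w' => (1/2:ℂ) * (fderiv ℝ F w' (Pi.single i 1)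
      + Complex.I * fderiv ℝ F w' (Pi.single i Complex.I)) := rfl
  rw [this, fderiv_const_mul hd, fderiv_fun_add ((h1 _) w) (((h1 _) w).const_mul _),
    fderiv_const_mul ((h1 _) w)]
  simp only [ContinuousLinearMap.smul_apply, ContinuousLinearMap.add_apply, smul_eq_mul]
  rw [fderiv_dir_fderiv hF, fderiv_dir_fderiv hF]

lemma pdzbar_pdz_symm (hF : ContDiff ℝ 2 F) (i j : Fin n) (w : Fin n → ℂ) :
    pdzbar (pdz F i) j w = pdz (pdzbar F j) i w := by
  rw [pdzbar, pdz, fderiv_pdz_apply hF, fderiv_pdz_apply hF,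
    fderiv_pdzbar_apply hF, fderiv_pdzbar_apply hF,
    second_symm hF w (Pi.single j 1) (Pi.single i 1),
    second_symm hF w (Pi.single j 1) (Pi.single i Complex.I),
    second_symm hF w (Pi.single j Complex.I) (Pi.single i 1),
    second_symm hF w (Pi.single j Complex.I) (Pi.single i Complex.I)]
  ring

lemma pdz_pdz_symm (hF : ContDiff ℝ 2 F) (i j : Fin n) (w : Fin n → ℂ) :
    pdz (pdz F i) j w = pdz (pdz F j) i w := by
  rw [pdz, pdz, fderiv_pdz_apply hF, fderiv_pdz_apply hF,
    fderiv_pdz_apply hF, fderiv_pdz_apply hF,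
    second_symm hF w (Pi.single j 1) (Pi.single i 1),
    second_symm hF w (Pi.single j 1) (Pi.single i Complex.I),
    second_symm hF w (Pi.single j Complex.I) (Pi.single i 1),
    second_symm hF w (Pi.single j Complex.I) (Pi.single i Complex.I)]
  ring
end secder

/-- Diffusion property (chain rule) for the complex Ornstein–Uhlenbeck operator. -/
theorem diffusion_property (θ : ℝ) (hθ : θ ∈ Set.Ioo (-(Real.pi / 2)) (Real.pi / 2))
    (n : ℕ) (hn : 1 ≤ n) (φ : Fin n → ℂ → ℂ) (hφ : ∀ i, ContDiff ℝ 2 (φ i))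
    (F : (Fin n → ℂ) → ℂ) (hF : ContDiff ℝ 2 F) (z : ℂ) :
    LOU θ (fun w => F (fun i => φ i w)) z
      = 4 * (Real.cos θ : ℂ) *
          (∑ i : Fin n, ∑ j : Fin n,
            (dz (φ i) z * dzbar (φ j) z * pdz (fun w => pdz F j w) i (fun k => φ k z)
              + dz (fun w => conj (φ i w)) z * dzbar (fun w => conj (φ j w)) z *
                  pdzbar (fun w => pdzbar F j w) i (fun k => φ k z)
              + (dz (φ i) z * dzbar (fun w => conj (φ j w)) z
                  + dzbar (φ i) z * dz (fun w => conj (φ j w)) z) *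
                  pdz (fun w => pdzbar F j w) i (fun k => φ k z)))
        + ∑ i : Fin n,
            (LOU θ (φ i) z * pdz F i (fun k => φ k z)
              + LOU θ (fun w => conj (φ i w)) z * pdzbar F i (fun k => φ k z)) := by
  have hFd : ∀ w, DifferentiableAt ℝ F w := fun w => (hF.differentiable two_ne_zero).differentiableAt
  have hΦ : ContDiff ℝ 1 (fun (w : ℂ) (i : Fin n) => φ i w) :=
    (contDiff_pi.2 hφ).of_le (by norm_num)
  have hφd : ∀ i, DifferentiableAt ℝ (φ i) z := fun i =>
    ((hφ i).differentiable two_ne_zero).differentiableAt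
  -- differentiability of the pieces
  have hdzbarφ : ∀ i : Fin n, DifferentiableAt ℝ (dzbar (φ i)) z := fun i =>
    ((contDiff_dzbar (hφ i)).differentiable one_ne_zero).differentiableAt
  have hconjφ : ∀ i : Fin n, ContDiff ℝ 2 (fun w => conj (φ i w)) := fun i =>
    Complex.conjCLE.contDiff.comp (hφ i)
  have hdzbarcφ : ∀ i : Fin n, DifferentiableAt ℝ (dzbar (fun w => conj (φ i w))) z := fun i =>
    ((contDiff_dzbar (hconjφ i)).differentiable one_ne_zero).differentiableAt
  have hPcomp : ∀ i : Fin n, DifferentiableAt ℝ (fun w => pdz F i (fun k => φ k w)) z := fun i =>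
    (((contDiff_pdz hF i).comp hΦ).differentiable one_ne_zero).differentiableAt
  have hQcomp : ∀ i : Fin n, DifferentiableAt ℝ (fun w => pdzbar F i (fun k => φ k w)) z := fun i =>
    (((contDiff_pdzbar hF i).comp hΦ).differentiable one_ne_zero).differentiableAt
  have hPd : ∀ i : Fin n, DifferentiableAt ℝ (pdz F i) (fun k => φ k z) := fun i =>
    ((contDiff_pdz hF i).differentiable one_ne_zero).differentiableAt
  have hQd : ∀ i : Fin n, DifferentiableAt ℝ (pdzbar F i) (fun k => φ k z) := fun i =>
    ((contDiff_pdzbar hF i).differentiable one_ne_zero).differentiableAt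
  -- step 1: rewrite the inner dzbar of the composition as a sum, pointwise
  have hfun : (fun w => dzbar (fun w' => F (fun i => φ i w')) w)
      = fun w => ∑ i : Fin n, (dzbar (φ i) w * pdz F i (fun k => φ k w)
          + dzbar (fun w' => conj (φ i w')) w * pdzbar F i (fun k => φ k w)) :=
    funext fun w => dzbar_comp hφ (hFd _)
  -- step 2: first-order facts
  have hdzc : dz (fun w => F (fun i => φ i w)) z
      = ∑ i : Fin n, (dz (φ i) z * pdz F i (fun k => φ k z)
          + dz (fun w => conj (φ i w)) z * pdzbar F i (fun k => φ k z)) :=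
    dz_comp hφ (hFd _)
  have hdzbarc : dzbar (fun w => F (fun i => φ i w)) z
      = ∑ i : Fin n, (dzbar (φ i) z * pdz F i (fun k => φ k z)
          + dzbar (fun w => conj (φ i w)) z * pdzbar F i (fun k => φ k z)) :=
    dzbar_comp hφ (hFd _)
  -- step 3: second-order expansion
  have hsecond : dz (fun w => dzbar (fun w' => F (fun i => φ i w')) w) z
      = ∑ i : Fin n,
          ((dz (dzbar (φ i)) z * pdz F i (fun k => φ k z)
            + dz (dzbar (fun w => conj (φ i w))) z * pdzbar F i (fun k => φ k z))
          + (dzbar (φ i) z * (∑ j : Fin n, (dz (φ j) z * pdz (pdz F i) j (fun k => φ k z)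
                + dz (fun w => conj (φ j w)) z * pdzbar (pdz F i) j (fun k => φ k z)))
            + dzbar (fun w => conj (φ i w)) z *
                (∑ j : Fin n, (dz (φ j) z * pdz (pdzbar F i) j (fun k => φ k z)
                + dz (fun w => conj (φ j w)) z * pdzbar (pdzbar F i) j (fun k => φ k z))))) := by
    rw [hfun, dz_sum (fun i => ((hdzbarφ i).fun_mul (hPcomp i)).fun_add ((hdzbarcφ i).fun_mul (hQcomp i)))]
    refine Finset.sum_congr rfl fun i _ => ?_
    rw [dz_add ((hdzbarφ i).fun_mul (hPcomp i)) ((hdzbarcφ i).fun_mul (hQcomp i)),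
      dz_mul (hdzbarφ i) (hPcomp i), dz_mul (hdzbarcφ i) (hQcomp i),
      dz_comp hφ (hPd i), dz_comp hφ (hQd i)]
    ring
  -- second-order sum identity via symmetry of second derivatives
  have key2 : (∑ i : Fin n,
        (dzbar (φ i) z * (∑ j : Fin n, (dz (φ j) z * pdz (pdz F i) j (fun k => φ k z)
              + dz (fun w => conj (φ j w)) z * pdzbar (pdz F i) j (fun k => φ k z)))
          + dzbar (fun w => conj (φ i w)) z *
              (∑ j : Fin n, (dz (φ j) z * pdz (pdzbar F i) j (fun k => φ k z)
              + dz (fun w => conj (φ j w)) z * pdzbar (pdzbar F i) j (fun k => φ k z)))))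
      = ∑ i : Fin n, ∑ j : Fin n,
          (dz (φ i) z * dzbar (φ j) z * pdz (fun w => pdz F j w) i (fun k => φ k z)
            + dz (fun w => conj (φ i w)) z * dzbar (fun w => conj (φ j w)) z *
                pdzbar (fun w => pdzbar F j w) i (fun k => φ k z)
            + (dz (φ i) z * dzbar (fun w => conj (φ j w)) z
                + dzbar (φ i) z * dz (fun w => conj (φ j w)) z) *
                pdz (fun w => pdzbar F j w) i (fun k => φ k z)) := by
    have step1 : (∑ i : Fin n,
        (dzbar (φ i) z * (∑ j : Fin n, (dz (φ j) z * pdz (pdz F i) j (fun k => φ k z)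
              + dz (fun w => conj (φ j w)) z * pdzbar (pdz F i) j (fun k => φ k z)))
          + dzbar (fun w => conj (φ i w)) z *
              (∑ j : Fin n, (dz (φ j) z * pdz (pdzbar F i) j (fun k => φ k z)
              + dz (fun w => conj (φ j w)) z * pdzbar (pdzbar F i) j (fun k => φ k z)))))
        = ∑ i : Fin n, ∑ j : Fin n,
            ((dzbar (φ i) z * dz (φ j) z * pdz (pdz F i) j (fun k => φ k z)
              + dzbar (fun w => conj (φ i w)) z * dz (φ j) z * pdz (pdzbar F i) j (fun k => φ k z)
              + dzbar (fun w => conj (φ i w)) z * dz (fun w => conj (φ j w)) z *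
                  pdzbar (pdzbar F i) j (fun k => φ k z))
            + dzbar (φ i) z * dz (fun w => conj (φ j w)) z *
                pdz (pdzbar F j) i (fun k => φ k z)) := by
      refine Finset.sum_congr rfl fun i _ => ?_
      rw [Finset.mul_sum, Finset.mul_sum, ← Finset.sum_add_distrib]
      refine Finset.sum_congr rfl fun j _ => ?_
      rw [pdzbar_pdz_symm hF i j]
      ring
    rw [step1]
    have step2 : ∀ (S T : Fin n → Fin n → ℂ),
        (∑ i : Fin n, ∑ j : Fin n, (S i j + T i j)) = (∑ i : Fin n, ∑ j : Fin n, (S j i + T i j)) := by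
      intro S T
      simp only [Finset.sum_add_distrib]
      rw [Finset.sum_comm]
    rw [step2]
    refine Finset.sum_congr rfl fun i _ => Finset.sum_congr rfl fun j _ => ?_
    ring
  -- final assembly
  rw [LOU, hsecond, Finset.sum_add_distrib, hdzc, hdzbarc, key2]
  have fo_eq : 4 * (Real.cos θ : ℂ) * (∑ i : Fin n,
        (dz (dzbar (φ i)) z * pdz F i (fun k => φ k z)
          + dz (dzbar (fun w => conj (φ i w))) z * pdzbar F i (fun k => φ k z)))
      - Complex.exp (θ * Complex.I) * z * (∑ i : Fin n,
          (dz (φ i) z * pdz F i (fun k => φ k z)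
            + dz (fun w => conj (φ i w)) z * pdzbar F i (fun k => φ k z)))
      - Complex.exp (-θ * Complex.I) * (conj z) * (∑ i : Fin n,
          (dzbar (φ i) z * pdz F i (fun k => φ k z)
            + dzbar (fun w => conj (φ i w)) z * pdzbar F i (fun k => φ k z)))
      = ∑ i : Fin n, (LOU θ (φ i) z * pdz F i (fun k => φ k z)
          + LOU θ (fun w => conj (φ i w)) z * pdzbar F i (fun k => φ k z)) := by
    rw [Finset.mul_sum, Finset.mul_sum, Finset.mul_sum, ← Finset.sum_sub_distrib,
      ← Finset.sum_sub_distrib]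
    refine Finset.sum_congr rfl fun i _ => ?_
    rw [LOU, LOU]
    ring
  linear_combination fo_eq
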